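/- Let P = (p_1,...,p_n) be a parking function of length n and let c ∈ {1,...,n} be a car. Then c is critical for P if and only if c is a right-to-left maximum in PA(P)^{−1}; that is, immediately after car c is parked there is no empty space among the spaces strictly to the right of q_c within {1,...,n} if and only if every car parked in a space strictly greater than q_c has a car number smaller than c. -/

import Mathlib

/-!  Parking functions and the parking algorithm. -/

/-- Parking algorithm: cars `0, 1, ..., n-1` (in Lean's 0-based indexing of `Fin n`,
representing cars `1, ..., n`) arrive in order; car `i` drives to its favorite
(1-indexed) space `p i` and parks in the first space `s ≥ p i` not occupied by an
earlier car.  `PA p i` is the space where car `i` actually parks. -/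
noncomputable def PA {n : ℕ} (p : Fin n → ℕ) (i : Fin n) : ℕ :=
  sInf {s : ℕ | p i ≤ s ∧ ∀ j : Fin n, j < i → PA p j ≠ s}
termination_by i.val
decreasing_by exact ‹_ < _›

/-- `p` is a parking function of length `n`: every favorite space is in `{1, ..., n}`
and every car ends up parked in a space `≤ n`. -/
def IsParkingFunction {n : ℕ} (p : Fin n → ℕ) : Prop :=
  (∀ i, 1 ≤ p i ∧ p i ≤ n) ∧ ∀ i, PA p i ≤ n

/-- The set (type) `PF_n` of parking functions of length `n`. -/
def ParkingFunction (n : ℕ) : Type :=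
  {p : Fin n → ℕ // IsParkingFunction p}

instance {n : ℕ} : Finite (ParkingFunction n) := by
  apply Finite.of_injective
    (fun P : ParkingFunction n => fun i => (⟨P.1 i, Nat.lt_succ_of_le (P.2.1 i).2⟩ : Fin (n+1)))
  intro P Q h
  apply Subtype.ext; funext i
  simpa [Fin.mk.injEq] using congrFun h i

noncomputable instance {n : ℕ} : Fintype (ParkingFunction n) := Fintype.ofFinite _

/-- `jumpAt p c` is the number of jumps of car `c`, i.e. `q_c - p_c`. -/
noncomputable def jumpAt {n : ℕ} (p : Fin n → ℕ) (c : Fin n) : ℕ := PA p c - p c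

/-- `jump p` is the total number of jumps. -/
noncomputable def jump {n : ℕ} (p : Fin n → ℕ) : ℕ := ∑ c, jumpAt p c

/-- `luckyCount p k` is the number of cars `c` with `jump(p : c) = k`. -/
noncomputable def luckyCount {n : ℕ} (p : Fin n → ℕ) (k : ℕ) : ℕ :=
  Set.ncard {c : Fin n | jumpAt p c = k}

/-- `lucky p` is the number of lucky cars, i.e. cars with no jumps. -/
noncomputable def lucky {n : ℕ} (p : Fin n → ℕ) : ℕ :=
  Set.ncard {c : Fin n | jumpAt p c = 0}

/-- Car `c` is critical: immediately after car `c` is parked, there is no empty space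
among the spaces strictly to the right of its space `q_c` within `{1, ..., n}`. -/
def IsCritical {n : ℕ} (p : Fin n → ℕ) (c : Fin n) : Prop :=
  ∀ s : ℕ, PA p c < s → s ≤ n → ∃ j : Fin n, j ≤ c ∧ PA p j = s

/-- `critic p` is the number of critical cars. -/
noncomputable def critic {n : ℕ} (p : Fin n → ℕ) : ℕ :=
  Set.ncard {c : Fin n | IsCritical p c}

/-!  Rooted labeled forests, encoded by their parent function. -/

/-- A parent function `par : Fin n → Option (Fin n)` (where `par v = none` means that
`v` is a root) encodes a rooted labeled forest on `n` vertices iff it has no cycles. -/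
def IsForest {n : ℕ} (par : Fin n → Option (Fin n)) : Prop :=
  ∀ v : Fin n, ¬ Relation.TransGen (fun a b => par a = some b) v v

/-- The set (type) `F_n` of rooted labeled forests on `n` vertices. -/
def Forest (n : ℕ) : Type := {par : Fin n → Option (Fin n) // IsForest par}

instance {n : ℕ} : Finite (Forest n) := Subtype.finite
noncomputable instance {n : ℕ} : Fintype (Forest n) := Fintype.ofFinite _

/-- `x` is a descendant of `v`: `v` lies on the (unique) path from the root of `x`'s
component to `x`, i.e. the ancestor chain of `x` reaches `v`. -/
def Descendant {n : ℕ} (par : Fin n → Option (Fin n)) (v x : Fin n) : Prop :=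
  Relation.ReflTransGen (fun a b => par a = some b) x v

/-- `forestInvAt F v = inv(F : v)`, the number of pairs `(v, x)` with `v > x` and
`x` a descendant of `v`. -/
noncomputable def forestInvAt {n : ℕ} (F : Forest n) (v : Fin n) : ℕ :=
  Set.ncard {x : Fin n | x < v ∧ Descendant F.1 v x}

/-- `forestInv F = inv(F)`, the total number of inversions of `F`. -/
noncomputable def forestInv {n : ℕ} (F : Forest n) : ℕ := ∑ v, forestInvAt F v

/-- `forestLeadCount F k` is the number of vertices `v` with `inv(F : v) = k`. -/
noncomputable def forestLeadCount {n : ℕ} (F : Forest n) (k : ℕ) : ℕ :=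
  Set.ncard {v : Fin n | forestInvAt F v = k}

/-- `forestLead F = lead(F)`, the number of leaders of `F`. -/
noncomputable def forestLead {n : ℕ} (F : Forest n) : ℕ :=
  Set.ncard {v : Fin n | forestInvAt F v = 0}

/-- `forestTree F = tree(F)`, the number of trees (connected components) of `F`,
i.e. the number of roots. -/
noncomputable def forestTree {n : ℕ} (F : Forest n) : ℕ :=
  Set.ncard {v : Fin n | F.1 v = none}

/-!
The parking outcome `PA p` is injective, since each car avoids the spaces of the earlier cars,
and for a parking function it is therefore a bijection onto `{1, …, n}`. Hence a space to the
right of `q_c` is filled by a car `j ≤ c` exactly when its occupant is smaller than `c`.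
-/

section ParkingAlgorithm

variable {n : ℕ} (p : Fin n → ℕ)

lemma PA_spec (i : Fin n) :
    PA p i ∈ {s : ℕ | p i ≤ s ∧ ∀ j : Fin n, j < i → PA p j ≠ s} := by
  rw [PA]
  apply Nat.sInf_mem
  obtain ⟨m, hm⟩ := (Set.finite_range (PA p)).bddAbove
  refine ⟨max m (p i) + 1, by omega, fun j _ hj => ?_⟩
  have : PA p j ≤ m := hm ⟨j, rfl⟩
  omega

lemma le_PA (i : Fin n) : p i ≤ PA p i :=
  (PA_spec p i).1

lemma PA_ne_of_lt {i j : Fin n} (hji : j < i) : PA p j ≠ PA p i :=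
  (PA_spec p i).2 j hji

lemma PA_injective : Function.Injective (PA p) := by
  intro i j h
  rcases lt_trichotomy i j with hij | rfl | hji
  · exact absurd h (PA_ne_of_lt p hij)
  · rfl
  · exact absurd h.symm (PA_ne_of_lt p hji)

variable {p}

lemma image_PA_eq_Icc (hp : IsParkingFunction p) :
    Finset.univ.image (PA p) = Finset.Icc 1 n := by
  apply Finset.eq_of_subset_of_card_le
  · intro s hs
    obtain ⟨i, -, rfl⟩ := Finset.mem_image.1 hs
    exact Finset.mem_Icc.2 ⟨(hp.1 i).1.trans (le_PA p i), hp.2 i⟩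
  · simp [Finset.card_image_of_injective _ (PA_injective p)]

lemma exists_PA_eq (hp : IsParkingFunction p) {s : ℕ} (hs₁ : 1 ≤ s) (hsn : s ≤ n) :
    ∃ j, PA p j = s := by
  simpa [← image_PA_eq_Icc hp] using Finset.mem_Icc.2 ⟨hs₁, hsn⟩

end ParkingAlgorithm

/-- A car `c` of a parking function `p` is critical if and only if
`c` is a right-to-left maximum in `PA(p)⁻¹`, i.e. every car parked in a space strictly
greater than `q_c` has a smaller car number than `c`. -/
theorem isCritical_iff_rtl_max (n : ℕ) (p : Fin n → ℕ) (hp : IsParkingFunction p)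
    (c : Fin n) :
    IsCritical p c ↔ ∀ j : Fin n, PA p c < PA p j → j < c := by
  constructor
  · intro hcrit j hj
    obtain ⟨j', hj'c, hj'j⟩ := hcrit (PA p j) hj (hp.2 j)
    obtain rfl := PA_injective p hj'j
    exact hj'c.lt_of_ne (by rintro rfl; exact hj.false)
  · intro hmax s hs hsn
    obtain ⟨j, rfl⟩ := exists_PA_eq hp (by omega) hsn
    exact ⟨j, (hmax j hs).le, rfl⟩
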